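/- Let f : ℤ → ℝ be a function and let a ∈ ℤ₊ (nonnegative integers). Let μ > 0 be non-integer with m − 1 < μ < m, where m = ⌈μ⌉, and let p ∈ ℕ with μ > p. Then for all t ∈ ℕ with t ≥ a + m, the extended discrete backward fractional Taylor formula holds: ∇^p f(t) = Σ_{k=p}^{m−1} ((t−a)^{↑(k−p)} / (k−p)!) · ∇^k f(a) + (1/Γ(μ−p)) · Σ_{τ=a+1}^{t} (t−τ+1)^{↑(μ−p−1)} · ∇_{(a+1)*}^{μ} f(τ). -/

import Mathlib

open Finset

/-- Backward (nabla) difference: `∇f(t) = f(t) - f(t-1)`. -/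
def nabla (f : ℤ → ℝ) : ℤ → ℝ := fun t => f t - f (t - 1)

/-- Rising factorial `t^{↑α} = Γ(t+α)/Γ(t)`. -/
noncomputable def risingFac (t α : ℝ) : ℝ := Real.Gamma (t + α) / Real.Gamma t

/-- The `ν`-th order nabla fractional sum `∇_a^{-ν} f (t) = Σ_{s=a}^{t} (t-s+1)^{↑(ν-1)}/Γ(ν) · f(s)`. -/
noncomputable def fracSum (ν : ℝ) (a : ℤ) (f : ℤ → ℝ) : ℤ → ℝ := fun t =>
  ∑ s ∈ Finset.Icc a t, risingFac ((t - s + 1 : ℤ) : ℝ) (ν - 1) / Real.Gamma ν * f s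

/-- Caputo-like nabla fractional difference `∇_{a*}^{μ} f = ∇_a^{-(m-μ)} (∇^m f)`, `m = ⌈μ⌉`. -/
noncomputable def caputoNabla (μ : ℝ) (a : ℤ) (f : ℤ → ℝ) : ℤ → ℝ :=
  fracSum ((⌈μ⌉₊ : ℝ) - μ) a (nabla^[⌈μ⌉₊] f)

/-!
The kernel `(n+1)^{↑(ν-1)} / Γ(ν)` of the `ν`-th fractional sum is `Γ(ν+n) / (Γ(ν) n!)`, the
multiset coefficient `Ring.multichoose ν n`, so the Chu–Vandermonde identity is exactly the
semigroup law `∇^{-α} ∇^{-β} = ∇^{-(α+β)}` for `α, β > 0`. With `α = μ - p` and `β = m - μ`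
the remainder of the theorem becomes the `(m-p)`-fold sum of `∇^m f = ∇^{m-p} (∇^p f)`, and
the theorem is the integer-order Taylor formula for `∇^p f`. That formula follows by induction
on the order: expand `∇^{d+1} g(s) = ∇^{d+1} g(a) + Σ_{u=a+1}^{s} ∇^{d+2} g(u)` under the
remainder and apply the semigroup law once more.
-/

theorem Ring.multichoose_add {R : Type*} [CommRing R] [BinomialRing R] (r s : R) (n : ℕ) :
    Ring.multichoose (r + s) n =
      ∑ ij ∈ antidiagonal n, Ring.multichoose r ij.1 * Ring.multichoose s ij.2 := by
  have h := Ring.add_choose_eq (r := -r) (s := -s) n (Commute.all _ _)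
  rw [← neg_add, Ring.choose_neg'] at h
  simp only [Ring.choose_neg', smul_mul_smul_comm, ← Int.negOnePow_add] at h
  rw [sum_congr rfl fun ij hij => by rw [← Nat.cast_add, mem_antidiagonal.1 hij], ← smul_sum] at h
  exact MulAction.injective _ h

theorem Real.Gamma_add_nat_eq_mul_ascPochhammer {α : ℝ} (hα : 0 < α) (n : ℕ) :
    Real.Gamma (α + n) = Real.Gamma α * (ascPochhammer ℝ n).eval α := by
  induction n with
  | zero => simp
  | succ n ih =>
    rw [Nat.cast_succ, ← add_assoc, Real.Gamma_add_one (by positivity), ih,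
      ascPochhammer_succ_eval]
    ring

theorem risingFac_zero_right {x : ℝ} (hx : 0 < x) : risingFac x 0 = 1 := by
  rw [risingFac, add_zero, div_self (Real.Gamma_pos_of_pos hx).ne']

noncomputable def fracKernel (ν : ℝ) (n : ℤ) : ℝ := risingFac n (ν - 1) / Real.Gamma ν

theorem fracSum_apply (ν : ℝ) (a : ℤ) (f : ℤ → ℝ) (t : ℤ) :
    fracSum ν a f t = ∑ s ∈ Icc a t, fracKernel ν (t - s + 1) * f s :=
  rfl

theorem fracKernel_natCast_add_one (k : ℕ) (n : ℤ) :
    fracKernel (k + 1) n = risingFac n k / k.factorial := by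
  rw [fracKernel, add_sub_cancel_right, Real.Gamma_nat_eq_factorial]

theorem fracKernel_one {n : ℤ} (hn : 0 < n) : fracKernel 1 n = 1 := by
  simpa [risingFac_zero_right (Int.cast_pos.2 hn)] using fracKernel_natCast_add_one 0 n

theorem fracKernel_eq_multichoose {ν : ℝ} (hν : 0 < ν) (n : ℕ) :
    fracKernel ν (n + 1) = Ring.multichoose ν n := by
  have hfac : (n.factorial : ℝ) * Ring.multichoose ν n = (ascPochhammer ℝ n).eval ν := by
    rw [← nsmul_eq_mul, Ring.factorial_nsmul_multichoose_eq_ascPochhammer,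
      Polynomial.ascPochhammer_smeval_eq_eval]
  have hΓ := (Real.Gamma_pos_of_pos hν).ne'
  rw [fracKernel, risingFac, Int.cast_add, Int.cast_natCast, Int.cast_one,
    show (n : ℝ) + 1 + (ν - 1) = ν + n by ring, Real.Gamma_nat_eq_factorial,
    Real.Gamma_add_nat_eq_mul_ascPochhammer hν, ← hfac]
  field_simp

theorem sum_Icc_eq_sum_antidiagonal {M : Type*} [AddCommMonoid M] {s t : ℤ} (hst : s ≤ t)
    (G : ℕ → ℕ → M) :
    ∑ τ ∈ Icc s t, G (t - τ).toNat (τ - s).toNat =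
      ∑ ij ∈ antidiagonal (t - s).toNat, G ij.1 ij.2 := by
  refine sum_nbij' (fun τ => ((t - τ).toNat, (τ - s).toNat)) (fun ij => t - ij.1)
    ?_ ?_ ?_ ?_ (fun _ _ => rfl) <;>
    simp only [mem_Icc, HasAntidiagonal.mem_antidiagonal, Prod.forall, Prod.mk.injEq] <;> omega

theorem sum_fracKernel_mul_fracKernel {α β : ℝ} (hα : 0 < α) (hβ : 0 < β) {s t : ℤ}
    (hst : s ≤ t) :
    ∑ τ ∈ Icc s t, fracKernel α (t - τ + 1) * fracKernel β (τ - s + 1) =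
      fracKernel (α + β) (t - s + 1) := by
  have hmultichoose : ∀ τ ∈ Icc s t, fracKernel α (t - τ + 1) * fracKernel β (τ - s + 1) =
      Ring.multichoose α (t - τ).toNat * Ring.multichoose β (τ - s).toNat := by
    intro τ hτ
    rw [mem_Icc] at hτ
    rw [← fracKernel_eq_multichoose hα, ← fracKernel_eq_multichoose hβ,
      Int.toNat_of_nonneg (by omega), Int.toNat_of_nonneg (by omega)]
  rw [sum_congr rfl hmultichoose,
    sum_Icc_eq_sum_antidiagonal hst fun i j => Ring.multichoose α i * Ring.multichoose β j,
    ← Ring.multichoose_add,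
    ← fracKernel_eq_multichoose (add_pos hα hβ), Int.toNat_of_nonneg (by omega)]

theorem sum_Icc_fracKernel {ν : ℝ} (hν : 0 < ν) {s t : ℤ} (hst : s ≤ t) :
    ∑ τ ∈ Icc s t, fracKernel ν (t - τ + 1) = fracKernel (ν + 1) (t - s + 1) := by
  rw [← sum_fracKernel_mul_fracKernel hν one_pos hst]
  refine sum_congr rfl fun τ hτ => ?_
  rw [fracKernel_one (by rw [mem_Icc] at hτ; omega), mul_one]

theorem fracSum_fracSum {α β : ℝ} (hα : 0 < α) (hβ : 0 < β) (a : ℤ) (f : ℤ → ℝ) (t : ℤ) :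
    fracSum α a (fracSum β a f) t = fracSum (α + β) a f t := by
  simp only [fracSum_apply, mul_sum, ← mul_assoc]
  rw [sum_comm' (t' := Icc a t) (s' := fun s => Icc s t) (by intros; simp only [mem_Icc]; omega)]
  refine sum_congr rfl fun s hs => ?_
  rw [← sum_mul, sum_fracKernel_mul_fracKernel hα hβ (mem_Icc.1 hs).2]

theorem fracSum_one (a : ℤ) (f : ℤ → ℝ) (t : ℤ) : fracSum 1 a f t = ∑ s ∈ Icc a t, f s :=
  (fracSum_apply 1 a f t).trans <| sum_congr rfl fun s hs => by
    rw [fracKernel_one (by rw [mem_Icc] at hs; omega), one_mul]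

theorem eq_add_fracSum_one_nabla (g : ℤ → ℝ) {a t : ℤ} (hat : a ≤ t) :
    g t = g a + fracSum 1 (a + 1) (nabla g) t := by
  rw [fracSum_one]
  induction t, hat using Int.leInduction with
  | base => simp
  | succ t hat ih =>
    rw [← insert_Icc_right_eq_Icc_add_one (by omega), sum_insert (by simp), add_left_comm, ← ih,
      nabla, add_sub_cancel_right, sub_add_cancel]

theorem nabla_taylor (g : ℤ → ℝ) {a t : ℤ} (hat : a < t) (d : ℕ) :
    g t = ∑ k ∈ range (d + 1), risingFac (t - a : ℤ) k / k.factorial * nabla^[k] g a +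
      fracSum (d + 1) (a + 1) (nabla^[d + 1] g) t := by
  induction d with
  | zero =>
    simp only [zero_add, sum_range_one, Nat.cast_zero, Nat.factorial_zero, Nat.cast_one, div_one,
      Function.iterate_zero_apply, Function.iterate_one]
    rw [risingFac_zero_right (Int.cast_pos.2 (sub_pos.2 hat)), one_mul]
    exact eq_add_fracSum_one_nabla g hat.le
  | succ d ih =>
    have hexpand : ∀ s ∈ Icc (a + 1) t,
        nabla^[d + 1] g s = nabla^[d + 1] g a + fracSum 1 (a + 1) (nabla^[d + 1 + 1] g) s := by
      intro s hs
      rw [Function.iterate_succ_apply' nabla (d + 1)]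
      exact eq_add_fracSum_one_nabla _ (by rw [mem_Icc] at hs; omega)
    have hremainder : fracSum (d + 1) (a + 1) (nabla^[d + 1] g) t =
        risingFac (t - a : ℤ) (d + 1 : ℕ) / (d + 1).factorial * nabla^[d + 1] g a +
          fracSum ((d + 1 : ℕ) + 1) (a + 1) (nabla^[d + 1 + 1] g) t := by
      calc fracSum (d + 1) (a + 1) (nabla^[d + 1] g) t
          = (∑ s ∈ Icc (a + 1) t, fracKernel (d + 1) (t - s + 1)) * nabla^[d + 1] g a +
              fracSum (d + 1) (a + 1) (fracSum 1 (a + 1) (nabla^[d + 1 + 1] g)) t := by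
            rw [fracSum_apply, sum_mul, fracSum_apply, ← sum_add_distrib]
            exact sum_congr rfl fun s hs => by rw [hexpand s hs, mul_add]
        _ = _ := by
            rw [sum_Icc_fracKernel (by positivity) (by omega), fracSum_fracSum (by positivity)
              one_pos, ← fracKernel_natCast_add_one, show t - (a + 1) + 1 = t - a by ring]
            push_cast
            rfl
    rw [ih, sum_range_succ _ (d + 1), add_assoc, hremainder]

theorem discrete_nabla_fractional_taylor_extended_general
    (f : ℤ → ℝ) (a : ℕ) (μ : ℝ)
    (m : ℕ) (hm : m = ⌈μ⌉₊) (hm2 : μ < m)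
    (p : ℕ) (hp : (p : ℝ) < μ)
    (t : ℤ) (ht : (a : ℤ) + m ≤ t) :
    nabla^[p] f t = (∑ k ∈ Finset.Icc p (m - 1),
        risingFac ((t - a : ℤ) : ℝ) ((k - p : ℕ)) / (Nat.factorial (k - p)) *
          nabla^[k] f a) +
      (1 / Real.Gamma (μ - p)) * ∑ τ ∈ Finset.Icc ((a : ℤ) + 1) t,
        risingFac ((t - τ + 1 : ℤ) : ℝ) (μ - p - 1) * caputoNabla μ ((a : ℤ) + 1) f τ := by
  obtain ⟨d, rfl⟩ : ∃ d, m = p + d + 1 :=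
    ⟨m - p - 1, by have : p < m := (by exact_mod_cast hp.trans hm2); omega⟩
  have hpoly : ∑ k ∈ Icc p (p + d + 1 - 1),
        risingFac ((t - a : ℤ) : ℝ) ((k - p : ℕ)) / (Nat.factorial (k - p)) * nabla^[k] f a =
      ∑ k ∈ range (d + 1),
        risingFac ((t - a : ℤ) : ℝ) k / k.factorial * nabla^[k] (nabla^[p] f) a := by
    rw [Nat.add_sub_cancel, ← Ico_add_one_right_eq_Icc, sum_Ico_eq_sum_range,
      show p + d + 1 - p = d + 1 by omega]
    refine sum_congr rfl fun k _ => ?_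
    rw [Nat.add_sub_cancel_left, ← Function.iterate_add_apply, add_comm]
  have hremainder : (1 / Real.Gamma (μ - p)) * ∑ τ ∈ Icc ((a : ℤ) + 1) t,
        risingFac ((t - τ + 1 : ℤ) : ℝ) (μ - p - 1) * caputoNabla μ ((a : ℤ) + 1) f τ =
      fracSum (d + 1) (a + 1) (nabla^[d + 1] (nabla^[p] f)) t := by
    calc _ = fracSum (μ - p) (a + 1) (fracSum ((p + d + 1 : ℕ) - μ) (a + 1)
          (nabla^[p + d + 1] f)) t := by
          rw [mul_sum, hm, fracSum_apply]
          exact sum_congr rfl fun τ _ => by rw [fracKernel, caputoNabla]; ring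
      _ = _ := by
          rw [fracSum_fracSum (sub_pos.2 hp) (sub_pos.2 hm2), ← Function.iterate_add_apply,
            add_comm (d + 1), ← add_assoc]
          congr 1
          push_cast
          ring
  rw [hpoly, hremainder]
  exact nabla_taylor _ (by omega) d

/-- Extended discrete backward fractional Taylor formula. -/
theorem discrete_nabla_fractional_taylor_extended
    (f : ℤ → ℝ) (a : ℕ) (μ : ℝ) (hμ : 0 < μ) (hμint : ∀ n : ℤ, μ ≠ n)
    (m : ℕ) (hm : m = ⌈μ⌉₊) (hm1 : (m : ℝ) - 1 < μ) (hm2 : μ < m)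
    (p : ℕ) (hp : (p : ℝ) < μ)
    (t : ℤ) (ht : (a : ℤ) + m ≤ t) :
    nabla^[p] f t = (∑ k ∈ Finset.Icc p (m - 1),
        risingFac ((t - a : ℤ) : ℝ) ((k - p : ℕ)) / (Nat.factorial (k - p)) *
          nabla^[k] f a) +
      (1 / Real.Gamma (μ - p)) * ∑ τ ∈ Finset.Icc ((a : ℤ) + 1) t,
        risingFac ((t - τ + 1 : ℤ) : ℝ) (μ - p - 1) * caputoNabla μ ((a : ℤ) + 1) f τ :=
  discrete_nabla_fractional_taylor_extended_general f a μ m hm hm2 p hp t ht
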